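/- For all a, a', b, b', c, c' ∈ (0, 0.1]: (i) each of the pairs □(s_a), □(s_{a'}); □(p_{a,b}), □(p_{a',b'}); □(q_{b,c}), □(q_{b',c'}); and □(t_c), □(t_{c'}) has nonempty intersection; (ii) each of the pairs □(s_a), □(q_{b,c}); □(s_a), □(t_c); and □(p_{a,b}), □(t_c) is disjoint. -/

import Mathlib

noncomputable section

/-- The closed axis-parallel hypercube of side length 1 centered at `p ∈ ℝ⁴`. -/
def cube (p : Fin 4 → ℝ) : Set (Fin 4 → ℝ) :=
  {x | ∀ i, |x i - p i| ≤ 1 / 2}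

/-- Center `s_a = (a, −a, 0, 0)`. -/
def sC (a : ℝ) : Fin 4 → ℝ := ![a, -a, 0, 0]

/-- Center `p_{a,b} = (1+a, 1−a, 0.5+b, 0.5−b)`. -/
def pC (a b : ℝ) : Fin 4 → ℝ := ![1 + a, 1 - a, 0.5 + b, 0.5 - b]

/-- Center `q_{b,c} = (1+c, 1−c, 1.5+b, 1.5−b)`. -/
def qC (b c : ℝ) : Fin 4 → ℝ := ![1 + c, 1 - c, 1.5 + b, 1.5 - b]

/-- Center `t_c = (c, −c, 2, 2)`. -/
def tC (c : ℝ) : Fin 4 → ℝ := ![c, -c, 2, 2]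

/-! Two unit cubes meet iff their centres are at sup-distance at most 1. Within each of the
four families the centres differ coordinatewise only by `±(a - a')`, `±(b - b')` or `±(c - c')`,
all of size less than `1`, whereas in the pairs `s, q`, `s, t` and `p, t` the third coordinates
differ by more than `1`. -/

theorem cube_inter_nonempty_iff {p q : Fin 4 → ℝ} :
    (cube p ∩ cube q).Nonempty ↔ ∀ i, |p i - q i| ≤ 1 := by
  constructor
  · rintro ⟨x, hxp, hxq⟩ i
    calc |p i - q i| = |(x i - q i) - (x i - p i)| := by congr 1; ring
      _ ≤ |x i - q i| + |x i - p i| := abs_sub _ _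
      _ ≤ 1 := by linarith [hxp i, hxq i]
  · intro h
    refine ⟨(p + q) / 2, fun i => ?_, fun i => ?_⟩ <;>
    · have := abs_le.1 (h i)
      simp only [Pi.div_apply, Pi.add_apply, Pi.ofNat_apply]
      rw [abs_le]; constructor <;> linarith

theorem disjoint_cube_iff {p q : Fin 4 → ℝ} :
    Disjoint (cube p) (cube q) ↔ ∃ i, 1 < |p i - q i| := by
  rw [Set.disjoint_iff_inter_eq_empty, ← Set.not_nonempty_iff_eq_empty,
    cube_inter_nonempty_iff]
  push Not
  rfl

theorem abs_sub_le_one_of_mem_Ioc {x y : ℝ} (hx : x ∈ Set.Ioc (0 : ℝ) 0.1)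
    (hy : y ∈ Set.Ioc (0 : ℝ) 0.1) : |x - y| ≤ 1 :=
  abs_sub_le_of_nonneg_of_le hx.1.le (hx.2.trans (by norm_num)) hy.1.le (hy.2.trans (by norm_num))

theorem stmt4 (a a' b b' c c' : ℝ)
    (ha : a ∈ Set.Ioc (0 : ℝ) 0.1) (ha' : a' ∈ Set.Ioc (0 : ℝ) 0.1)
    (hb : b ∈ Set.Ioc (0 : ℝ) 0.1) (hb' : b' ∈ Set.Ioc (0 : ℝ) 0.1)
    (hc : c ∈ Set.Ioc (0 : ℝ) 0.1) (hc' : c' ∈ Set.Ioc (0 : ℝ) 0.1) :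
    ((cube (sC a) ∩ cube (sC a')).Nonempty ∧
     (cube (pC a b) ∩ cube (pC a' b')).Nonempty ∧
     (cube (qC b c) ∩ cube (qC b' c')).Nonempty ∧
     (cube (tC c) ∩ cube (tC c')).Nonempty) ∧
    (Disjoint (cube (sC a)) (cube (qC b c)) ∧
     Disjoint (cube (sC a)) (cube (tC c)) ∧
     Disjoint (cube (pC a b)) (cube (tC c))) := by
  have hA := abs_sub_le_one_of_mem_Ioc ha ha'
  have hB := abs_sub_le_one_of_mem_Ioc hb hb'
  have hC := abs_sub_le_one_of_mem_Ioc hc hc'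
  refine ⟨⟨?_, ?_, ?_, ?_⟩, ?_, ?_, ?_⟩
  iterate 4
    rw [cube_inter_nonempty_iff]
    simp [Fin.forall_fin_succ, sC, pC, qC, tC, abs_sub_comm a', abs_sub_comm b', abs_sub_comm c',
      neg_add_eq_sub, hA, hB, hC]
  all_goals
    refine disjoint_cube_iff.2 ⟨2, lt_abs.2 <| .inr ?_⟩
    simp only [sC, pC, qC, tC, Matrix.cons_val]
    linarith [hb.1, hb.2]
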